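/- Let G act sharply 2-transitively on Ω. If some product of two distinct involutions of G is itself an involution, then no point stabilizer contains an involution. -/

import Mathlib

/-!
All involutions of a sharply 2-transitive group are conjugate, since an involution is the unique
element swapping any point it moves with its image; so if one involution fixes a point, all do.
Two involutions whose product is an involution commute, and a nontrivial element fixes at most
one point, so they fix a common point `b`. But an involution `ρ` fixing `b` is determined by `b`:
if `π` is the involution swapping `b` with another point `y` and `m` is the fixed point of `π`,
then `π * ρ * π = k * π * k⁻¹` for the unique `k` fixing `b` and sending `m` to `y`.
-/

def IsSharply2Transitive (G Ω : Type*) [Group G] [MulAction G Ω] : Prop :=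
  ∀ x y z w : Ω, x ≠ y → z ≠ w → ∃! g : G, g • x = z ∧ g • y = w

theorem Commute.of_orderOf_eq_two {G : Type*} [Group G] {a b : G} (ha : orderOf a = 2)
    (hb : orderOf b = 2) (hab : orderOf (a * b) = 2) : Commute a b := by
  calc a * b = (a * b)⁻¹ := (inv_eq_self_of_orderOf_eq_two hab).symm
    _ = b⁻¹ * a⁻¹ := mul_inv_rev a b
    _ = b * a := by rw [inv_eq_self_of_orderOf_eq_two ha, inv_eq_self_of_orderOf_eq_two hb]

theorem smul_smul_self_of_orderOf_eq_two {G Ω : Type*} [Group G] [MulAction G Ω] {g : G}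
    (hg : orderOf g = 2) (x : Ω) : g • g • x = x := by
  nth_rw 1 [← inv_eq_self_of_orderOf_eq_two hg]
  exact inv_smul_smul g x

theorem IsConj.exists_smul_eq_self {G Ω : Type*} [Group G] [MulAction G Ω] {g g' : G}
    (hconj : IsConj g g') (hfix : ∃ x : Ω, g • x = x) : ∃ x : Ω, g' • x = x := by
  obtain ⟨c, rfl⟩ := isConj_iff.mp hconj
  obtain ⟨x, hx⟩ := hfix
  exact ⟨c • x, by simp [mul_smul, hx]⟩

namespace IsSharply2Transitive

variable {G Ω : Type*} [Group G] [MulAction G Ω]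

theorem eq_of_smul_eq_smul (h : IsSharply2Transitive G Ω) {x y : Ω} (hxy : x ≠ y) {g g' : G}
    (hx : g • x = g' • x) (hy : g • y = g' • y) : g = g' :=
  (h x y _ _ hxy ((MulAction.injective g).ne hxy)).unique ⟨rfl, rfl⟩ ⟨hx.symm, hy.symm⟩

theorem eq_one_of_smul_eq_self (h : IsSharply2Transitive G Ω) {x y : Ω} (hxy : x ≠ y) {g : G}
    (hx : g • x = x) (hy : g • y = y) : g = 1 :=
  h.eq_of_smul_eq_smul hxy (by rw [hx, one_smul]) (by rw [hy, one_smul])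

theorem eq_of_smul_eq_self_of_ne_one (h : IsSharply2Transitive G Ω) {g : G} (hg : g ≠ 1)
    {x y : Ω} (hx : g • x = x) (hy : g • y = y) : x = y := by
  by_contra hxy
  exact hg (h.eq_one_of_smul_eq_self hxy hx hy)

theorem exists_smul_ne (h : IsSharply2Transitive G Ω) [Nontrivial Ω] {g : G} (hg : g ≠ 1) :
    ∃ x : Ω, g • x ≠ x := by
  by_contra! hfix
  obtain ⟨x, y, hxy⟩ := exists_pair_ne Ω
  exact hg (h.eq_one_of_smul_eq_self hxy (hfix x) (hfix y))

theorem exists_orderOf_eq_two_swap (h : IsSharply2Transitive G Ω) {x y : Ω} (hxy : x ≠ y) :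
    ∃ π : G, orderOf π = 2 ∧ π • x = y ∧ π • y = x := by
  obtain ⟨π, ⟨hπx, hπy⟩, -⟩ := h x y y x hxy hxy.symm
  have hπ2 : π ^ 2 = 1 := h.eq_one_of_smul_eq_self hxy (by rw [sq, mul_smul, hπx, hπy])
    (by rw [sq, mul_smul, hπy, hπx])
  have hπ1 : π ≠ 1 := by
    rintro rfl
    exact hxy (by rwa [one_smul] at hπx)
  exact ⟨π, orderOf_eq_prime_iff.mpr ⟨hπ2, hπ1⟩, hπx, hπy⟩

theorem eq_of_swap (h : IsSharply2Transitive G Ω) {g g' : G} (hg : orderOf g = 2) {x : Ω}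
    (hx : g • x ≠ x) (hx' : g' • x = g • x) (hgx' : g' • g • x = x) : g' = g :=
  h.eq_of_smul_eq_smul hx.symm hx' (by rw [hgx', smul_smul_self_of_orderOf_eq_two hg])

theorem isConj_of_orderOf_eq_two (h : IsSharply2Transitive G Ω) [Nontrivial Ω] {g g' : G}
    (hg : orderOf g = 2) (hg' : orderOf g' = 2) : IsConj g g' := by
  obtain ⟨x, hx⟩ := h.exists_smul_ne (orderOf_eq_prime_iff.mp hg).2
  obtain ⟨x', hx'⟩ := h.exists_smul_ne (Ω := Ω) (orderOf_eq_prime_iff.mp hg').2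
  obtain ⟨c, ⟨hcx, hcgx⟩, -⟩ := h x (g • x) x' (g' • x') hx.symm hx'.symm
  refine isConj_iff.mpr ⟨c, h.eq_of_swap hg' hx' ?_ ?_⟩
  · rw [← hcgx, ← hcx]
    simp [mul_smul]
  · rw [← hcgx]
    simp [mul_smul, smul_smul_self_of_orderOf_eq_two hg, hcx]

theorem smul_eq_self_of_commute (h : IsSharply2Transitive G Ω) {σ τ : G} (hστ : Commute σ τ)
    (hτ : τ ≠ 1) {b : Ω} (hb : τ • b = b) : σ • b = b :=
  h.eq_of_smul_eq_self_of_ne_one hτ (by rw [smul_smul, ← hστ.eq, mul_smul, hb]) hb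

theorem exists_conj_eq_of_smul_eq_self (h : IsSharply2Transitive G Ω) {π ρ : G}
    (hπ : orderOf π = 2) (hρ : orderOf ρ = 2) {b y m : Ω} (hby : b ≠ y) (hπb : π • b = y)
    (hπy : π • y = b) (hπm : π • m = m) (hρb : ρ • b = b) :
    ∃ k : G, k • b = b ∧ k • m = y ∧ π * ρ * π = k * π * k⁻¹ := by
  set g := π * ρ * π
  have hg : orderOf g = 2 := by
    rw [← hρ, show g = π * ρ * π⁻¹ by rw [inv_eq_self_of_orderOf_eq_two hπ]]
    exact (SemiconjBy.orderOf_eq π (by simp [SemiconjBy, mul_assoc])).symm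
  have hg1 : g ≠ 1 := (orderOf_eq_prime_iff.mp hg).2
  have hgy : g • y = y := by simp [g, mul_smul, hπy, hρb, hπb]
  have hgb : g • b ≠ b := fun hgb => hby (h.eq_of_smul_eq_self_of_ne_one hg1 hgb hgy)
  obtain ⟨k, ⟨hkb, hky⟩, -⟩ := h b y b (g • b) hby hgb.symm
  have hk_inv_b : k⁻¹ • b = b := inv_smul_eq_iff.mpr hkb.symm
  -- both swap `b` and `g • b`
  have hconj : k * π * k⁻¹ = g := h.eq_of_swap hg hgb
    (by simp [mul_smul, hk_inv_b, hπb, hky]) (by simp [mul_smul, ← hky, hπy, hkb])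
  have hkm : k • m = y :=
    h.eq_of_smul_eq_self_of_ne_one hg1 (by simp [← hconj, mul_smul, hπm]) hgy
  exact ⟨k, hkb, hkm, hconj.symm⟩

theorem eq_of_orderOf_eq_two_of_smul_eq_self (h : IsSharply2Transitive G Ω) [Nontrivial Ω]
    (hfix : ∀ g : G, orderOf g = 2 → ∃ x : Ω, g • x = x) {ρ ρ' : G}
    (hρ : orderOf ρ = 2) (hρ' : orderOf ρ' = 2) {b : Ω} (hρb : ρ • b = b)
    (hρ'b : ρ' • b = b) : ρ = ρ' := by
  obtain ⟨y, hyb⟩ := exists_ne b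
  obtain ⟨π, hπ, hπb, hπy⟩ := h.exists_orderOf_eq_two_swap hyb.symm
  obtain ⟨m, hπm⟩ := hfix π hπ
  have hbm : b ≠ m := by
    rintro rfl
    exact hyb (hπb.symm.trans hπm)
  obtain ⟨k, hkb, hkm, hk⟩ :=
    h.exists_conj_eq_of_smul_eq_self hπ hρ hyb.symm hπb hπy hπm hρb
  obtain ⟨k', hk'b, hk'm, hk'⟩ :=
    h.exists_conj_eq_of_smul_eq_self hπ hρ' hyb.symm hπb hπy hπm hρ'b
  obtain rfl : k = k' :=
    h.eq_of_smul_eq_smul hbm (hkb.trans hk'b.symm) (hkm.trans hk'm.symm)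
  exact mul_left_cancel (mul_right_cancel (hk.trans hk'.symm))

end IsSharply2Transitive

theorem no_fixed_involution_of_involutive_product {G Ω : Type*} [Group G] [MulAction G Ω]
    [Nontrivial Ω] (h : IsSharply2Transitive G Ω)
    (hprod : ∃ σ τ : G, σ ≠ τ ∧ orderOf σ = 2 ∧ orderOf τ = 2 ∧ orderOf (σ * τ) = 2) :
    ∀ (ω : Ω) (σ : G), orderOf σ = 2 → σ • ω ≠ ω := by
  intro ω σ₀ hσ₀ hσ₀ω
  obtain ⟨σ, τ, hne, hσ, hτ, hστ⟩ := hprod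
  have hfix (g : G) (hg : orderOf g = 2) : ∃ x : Ω, g • x = x :=
    (h.isConj_of_orderOf_eq_two hσ₀ hg).exists_smul_eq_self ⟨ω, hσ₀ω⟩
  obtain ⟨b, hτb⟩ := hfix τ hτ
  have hστ_comm : Commute σ τ := .of_orderOf_eq_two hσ hτ hστ
  have hσb : σ • b = b :=
    h.smul_eq_self_of_commute hστ_comm (orderOf_eq_prime_iff.mp hτ).2 hτb
  exact hne (h.eq_of_orderOf_eq_two_of_smul_eq_self hfix hσ hτ hσb hτb)
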